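/- arXiv:0907.0055 — 2 statements merged into one kernel-verified Lean document; each statement's English description precedes it below -/
import Mathlib

section
/- Let λ⁺ > 0 > λ⁻ and μ be real numbers, and set A⁺ = [[λ⁺, μ], [0, λ⁺]] and A⁻ = [[λ⁻, μ], [0, λ⁻]]. If μ ≠ 0, then system (3) has a homoclinic orbit; moreover, if μ < 0 then every homoclinic orbit x of system (3) satisfies x₂(t) > 0 for all t ∈ ℝ (the homoclinic orbits lie above the x₁-axis), and if μ > 0 then every homoclinic orbit x satisfies x₂(t) < 0 for all t ∈ ℝ (the homoclinic orbits lie below the x₁-axis). -/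
open Matrix Filter

/-- A solution of system (3): `ẋ = A⁺x` when `x₁ > 0` and `ẋ = A⁻x` when `x₁ ≤ 0`,
where the derivative is the right-hand derivative (derivative within `[t, ∞)`). -/
def IsSolution3 (Ap Am : Matrix (Fin 2) (Fin 2) ℝ) (x : ℝ → Fin 2 → ℝ) : Prop :=
  Continuous x ∧ ∀ t : ℝ,
    (0 < x t 0 → HasDerivWithinAt x (Ap.mulVec (x t)) (Set.Ici t) t) ∧
    (x t 0 ≤ 0 → HasDerivWithinAt x (Am.mulVec (x t)) (Set.Ici t) t)

/-- A homoclinic orbit (to the origin) of system (3): a nowhere-vanishing solution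
tending to the origin as `t → ±∞`. -/
def IsHomoclinic3 (Ap Am : Matrix (Fin 2) (Fin 2) ℝ) (x : ℝ → Fin 2 → ℝ) : Prop :=
  IsSolution3 Ap Am x ∧ (∀ t : ℝ, x t ≠ 0) ∧
    Tendsto x atTop (nhds 0) ∧ Tendsto x atBot (nhds 0)

section Aux

open Set Real

lemma mulVec_explicit (a b : ℝ) (v : Fin 2 → ℝ) :
    (!![a, b; 0, a]).mulVec v = ![a * v 0 + b * v 1, a * v 1] := by
  funext i
  fin_cases i <;> simp [Matrix.mulVec, dotProduct, Fin.sum_univ_two, Matrix.vecHead, Matrix.vecTail]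

lemma le_of_rderiv_nonneg {f d : ℝ → ℝ} {a b : ℝ} (hab : a ≤ b)
    (hc : ContinuousOn f (Icc a b))
    (hd : ∀ t ∈ Ico a b, HasDerivWithinAt f (d t) (Ici t) t)
    (h0 : ∀ t ∈ Ico a b, 0 ≤ d t) : f a ≤ f b :=
  image_le_of_deriv_right_le_deriv_boundary (f := fun _ => f a) (f' := fun _ => 0)
    continuousOn_const (fun x _ => (hasDerivWithinAt_const x _ (f a)))
    le_rfl hc hd h0 (right_mem_Icc.2 hab)

lemma weight_deriv {f : ℝ → ℝ} {d c t : ℝ} (hf : HasDerivWithinAt f d (Set.Ici t) t) :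
    HasDerivWithinAt (fun s => f s * Real.exp (-c * s))
      ((d - c * f t) * Real.exp (-c * t)) (Set.Ici t) t := by
  have h1 : HasDerivAt (fun s : ℝ => -c * s) (-c) t := by
    simpa using (hasDerivAt_id t).const_mul (-c)
  have he := h1.exp
  have := hf.mul he.hasDerivWithinAt
  refine this.congr_deriv ?_
  ring

lemma tendsto_exp_neg_mul (b : ℝ) (hb : 0 < b) :
    Tendsto (fun t : ℝ => Real.exp (-b * t)) atTop (nhds 0) :=
  Real.tendsto_exp_atBot.comp ((tendsto_const_mul_atBot_of_neg (by linarith : -b < 0)).2 tendsto_id)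

lemma tendsto_mul_exp_neg_mul (b : ℝ) (hb : 0 < b) :
    Tendsto (fun t : ℝ => t * Real.exp (-b * t)) atTop (nhds 0) := by
  have h1 := tendsto_pow_mul_exp_neg_atTop_nhds_zero 1
  have h2 : Tendsto (fun t : ℝ => b * t) atTop atTop :=
    (tendsto_const_mul_atTop_of_pos hb).2 tendsto_id
  have h3 := (h1.comp h2).const_mul (1 / b)
  rw [mul_zero] at h3
  refine h3.congr fun t => ?_
  have hb' : b ≠ 0 := ne_of_gt hb
  field_simp
  ring_nf
  rfl

theorem sign_aux (lamP lamM μ : ℝ) (hP : 0 < lamP) (hM : lamM < 0) (hμ : μ ≠ 0)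
    (x : ℝ → Fin 2 → ℝ)
    (hx : IsHomoclinic3 !![lamP, μ; 0, lamP] !![lamM, μ; 0, lamM] x) :
    ∀ t : ℝ, μ * x t 1 < 0 := by
  obtain ⟨⟨hcont, hde⟩, hne, htop, hbot⟩ := hx
  have hc1 : Continuous fun t => x t 0 := (continuous_apply 0).comp hcont
  have hc2 : Continuous fun t => x t 1 := (continuous_apply 1).comp hcont
  set L : ℝ → ℝ := fun t => if 0 < x t 0 then lamP else lamM with hLdef
  have hLM : ∀ t, lamM ≤ L t := by
    intro t; by_cases h : 0 < x t 0 <;> simp [hLdef, h] <;> linarith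
  have hLP : ∀ t, L t ≤ lamP := by
    intro t; by_cases h : 0 < x t 0 <;> simp [hLdef, h] <;> linarith
  have hL1 : ∀ t, HasDerivWithinAt (fun s => x s 0) (L t * x t 0 + μ * x t 1) (Set.Ici t) t := by
    intro t
    by_cases h : 0 < x t 0
    · have h' := (hasDerivWithinAt_pi.1 ((hde t).1 h)) 0
      simpa [mulVec_explicit, hLdef, h, Matrix.vecHead, Matrix.vecTail] using h'
    · have h' := (hasDerivWithinAt_pi.1 ((hde t).2 (le_of_not_gt h))) 0
      simpa [mulVec_explicit, hLdef, h, Matrix.vecHead, Matrix.vecTail] using h'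
  have hL2 : ∀ t, HasDerivWithinAt (fun s => x s 1) (L t * x t 1) (Set.Ici t) t := by
    intro t
    by_cases h : 0 < x t 0
    · have h' := (hasDerivWithinAt_pi.1 ((hde t).1 h)) 1
      simpa [mulVec_explicit, hLdef, h, Matrix.vecHead, Matrix.vecTail] using h'
    · have h' := (hasDerivWithinAt_pi.1 ((hde t).2 (le_of_not_gt h))) 1
      simpa [mulVec_explicit, hLdef, h, Matrix.vecHead, Matrix.vecTail] using h'
  have hLx1 : ∀ t, 0 ≤ L t * x t 0 := by
    intro t; by_cases h : 0 < x t 0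
    · simp only [hLdef, if_pos h]; positivity
    · simp only [hLdef, if_neg h]; push_neg at h; nlinarith
  have htop1 : Tendsto (fun t => x t 0) atTop (nhds 0) := by
    simpa using tendsto_pi_nhds.1 htop 0
  have hbot1 : Tendsto (fun t => x t 0) atBot (nhds 0) := by
    simpa using tendsto_pi_nhds.1 hbot 0
  -- weighted monotonicity helpers
  have hwc : ∀ c : ℝ, Continuous fun t => x t 1 * Real.exp (-c * t) := by
    intro c; exact hc2.mul (Real.continuous_exp.comp (continuous_const.mul continuous_id))
  have key : ∀ c a b : ℝ, a ≤ b →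
      (∀ t ∈ Set.Ico a b, 0 ≤ (L t * x t 1 - c * x t 1) * Real.exp (-c * t)) →
      x a 1 * Real.exp (-c * a) ≤ x b 1 * Real.exp (-c * b) := by
    intro c a b hab hpos
    exact le_of_rderiv_nonneg hab (hwc c).continuousOn
      (fun t _ => weight_deriv (hL2 t)) hpos
  have keyneg : ∀ c a b : ℝ, a ≤ b →
      (∀ t ∈ Set.Ico a b, (L t * x t 1 - c * x t 1) * Real.exp (-c * t) ≤ 0) →
      x b 1 * Real.exp (-c * b) ≤ x a 1 * Real.exp (-c * a) := by
    intro c a b hab hneg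
    have := le_of_rderiv_nonneg (f := fun t => -(x t 1 * Real.exp (-c * t)))
      (d := fun t => -((L t * x t 1 - c * x t 1) * Real.exp (-c * t))) hab
      (hwc c).neg.continuousOn (fun t _ => (weight_deriv (hL2 t)).neg)
      (fun t ht => by simpa using neg_nonneg.2 (hneg t ht))
    beta_reduce at this
    linarith
  -- zero propagation
  have hprop : ∀ t₀, x t₀ 1 = 0 → ∀ s, x s 1 = 0 := by
    intro t₀ h0 s
    by_contra hs
    rcases lt_trichotomy s t₀ with hlt | heq | hgt
    · set S := Set.Icc s t₀ ∩ {t | x t 1 = 0} with hSdef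
      have hSne : S.Nonempty := ⟨t₀, ⟨hlt.le, le_refl t₀⟩, h0⟩
      have hSbdd : BddBelow S := ⟨s, fun t ht => ht.1.1⟩
      have hSc : IsClosed S := isClosed_Icc.inter (isClosed_eq hc2 continuous_const)
      set τ := sInf S with hτdef
      have hτS : τ ∈ S := hSc.csInf_mem hSne hSbdd
      have hτ0 : x τ 1 = 0 := hτS.2
      have hsτ : s < τ := lt_of_le_of_ne hτS.1.1 (fun h => hs (by rw [h]; exact hτ0))
      have hno : ∀ t, t ∈ Set.Ico s τ → x t 1 ≠ 0 := by
        intro t ht h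
        exact absurd (csInf_le hSbdd ⟨⟨ht.1, ht.2.le.trans hτS.1.2⟩, h⟩) (not_le.2 ht.2)
      rcases (Ne.lt_or_gt hs) with hneg | hpos
      · have hsgn : ∀ t ∈ Set.Icc s τ, x t 1 ≤ 0 := by
          intro t ht
          by_contra hpos'
          push_neg at hpos'
          have htτ : t < τ := lt_of_le_of_ne ht.2 (by rintro rfl; exact absurd hτ0 (ne_of_gt hpos'))
          obtain ⟨c, hcmem, hc0⟩ := intermediate_value_Icc ht.1 hc2.continuousOn ⟨hneg.le, hpos'.le⟩
          exact hno c ⟨hcmem.1, lt_of_le_of_lt hcmem.2 htτ⟩ hc0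
        have hD : ∀ t ∈ Set.Ico s τ, (L t * x t 1 - lamM * x t 1) * Real.exp (-lamM * t) ≤ 0 := by
          intro t ht
          have h1 := hLM t
          have h2 := hsgn t ⟨ht.1, ht.2.le⟩
          have h3 := Real.exp_pos (-lamM * t)
          have h4 : 0 ≤ (L t - lamM) * (-(x t 1)) := mul_nonneg (by linarith) (by linarith)
          nlinarith [mul_nonneg h4 h3.le]
        have hk := keyneg lamM s τ hsτ.le hD
        rw [hτ0, zero_mul] at hk
        nlinarith [Real.exp_pos (-lamM * s)]
      · have hsgn : ∀ t ∈ Set.Icc s τ, 0 ≤ x t 1 := by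
          intro t ht
          by_contra hneg'
          push_neg at hneg'
          have htτ : t < τ := lt_of_le_of_ne ht.2 (by rintro rfl; exact absurd hτ0 (ne_of_lt hneg'))
          obtain ⟨c, hcmem, hc0⟩ := intermediate_value_Icc' ht.1 hc2.continuousOn ⟨hneg'.le, hpos.le⟩
          exact hno c ⟨hcmem.1, lt_of_le_of_lt hcmem.2 htτ⟩ hc0
        have hD : ∀ t ∈ Set.Ico s τ, 0 ≤ (L t * x t 1 - lamM * x t 1) * Real.exp (-lamM * t) := by
          intro t ht
          have h1 := hLM t
          have h2 := hsgn t ⟨ht.1, ht.2.le⟩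
          have h3 := Real.exp_pos (-lamM * t)
          have h4 : 0 ≤ (L t - lamM) * (x t 1) := mul_nonneg (by linarith) h2
          nlinarith [mul_nonneg h4 h3.le]
        have hk := key lamM s τ hsτ.le hD
        rw [hτ0, zero_mul] at hk
        nlinarith [Real.exp_pos (-lamM * s)]
    · exact hs (heq ▸ h0)
    · set S := Set.Icc t₀ s ∩ {t | x t 1 = 0} with hSdef
      have hSne : S.Nonempty := ⟨t₀, ⟨le_refl t₀, hgt.le⟩, h0⟩
      have hSbdd : BddAbove S := ⟨s, fun t ht => ht.1.2⟩
      have hSc : IsClosed S := isClosed_Icc.inter (isClosed_eq hc2 continuous_const)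
      set σ := sSup S with hσdef
      have hσS : σ ∈ S := hSc.csSup_mem hSne hSbdd
      have hσ0 : x σ 1 = 0 := hσS.2
      have hσs : σ < s := lt_of_le_of_ne hσS.1.2 (fun h => hs (by rw [← h]; exact hσ0))
      have hno : ∀ t, t ∈ Set.Ioc σ s → x t 1 ≠ 0 := by
        intro t ht h
        exact absurd (le_csSup hSbdd ⟨⟨hσS.1.1.trans ht.1.le, ht.2⟩, h⟩) (not_le.2 ht.1)
      rcases (Ne.lt_or_gt hs) with hneg | hpos
      · have hsgn : ∀ t ∈ Set.Icc σ s, x t 1 ≤ 0 := by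
          intro t ht
          by_contra hpos'
          push_neg at hpos'
          have hσt : σ < t := lt_of_le_of_ne ht.1 (by rintro rfl; exact absurd hσ0 (ne_of_gt hpos'))
          obtain ⟨c, hcmem, hc0⟩ := intermediate_value_Icc' ht.2 hc2.continuousOn ⟨hneg.le, hpos'.le⟩
          exact hno c ⟨lt_of_lt_of_le hσt hcmem.1, hcmem.2⟩ hc0
        have hD : ∀ t ∈ Set.Ico σ s, 0 ≤ (L t * x t 1 - lamP * x t 1) * Real.exp (-lamP * t) := by
          intro t ht
          have h1 := hLP t
          have h2 := hsgn t ⟨ht.1, ht.2.le⟩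
          have h3 := Real.exp_pos (-lamP * t)
          have h4 : 0 ≤ (lamP - L t) * (-(x t 1)) := mul_nonneg (by linarith) (by linarith)
          nlinarith [mul_nonneg h4 h3.le]
        have hk := key lamP σ s hσs.le hD
        rw [hσ0, zero_mul] at hk
        nlinarith [Real.exp_pos (-lamP * s)]
      · have hsgn : ∀ t ∈ Set.Icc σ s, 0 ≤ x t 1 := by
          intro t ht
          by_contra hneg'
          push_neg at hneg'
          have hσt : σ < t := lt_of_le_of_ne ht.1 (by rintro rfl; exact absurd hσ0 (ne_of_lt hneg'))
          obtain ⟨c, hcmem, hc0⟩ := intermediate_value_Icc ht.2 hc2.continuousOn ⟨hneg'.le, hpos.le⟩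
          exact hno c ⟨lt_of_lt_of_le hσt hcmem.1, hcmem.2⟩ hc0
        have hD : ∀ t ∈ Set.Ico σ s, (L t * x t 1 - lamP * x t 1) * Real.exp (-lamP * t) ≤ 0 := by
          intro t ht
          have h1 := hLP t
          have h2 := hsgn t ⟨ht.1, ht.2.le⟩
          have h3 := Real.exp_pos (-lamP * t)
          have h4 : 0 ≤ (lamP - L t) * (x t 1) := mul_nonneg (by linarith) h2
          nlinarith [mul_nonneg h4 h3.le]
        have hk := keyneg lamP σ s hσs.le hD
        rw [hσ0, zero_mul] at hk
        nlinarith [Real.exp_pos (-lamP * s)]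
  -- x₂ is nowhere zero
  have hx2ne : ∀ t, x t 1 ≠ 0 := by
    intro t ht
    have hall : ∀ s, x s 1 = 0 := hprop t ht
    have hmono : Monotone fun t => x t 0 := by
      intro a b hab
      refine le_of_rderiv_nonneg hab hc1.continuousOn (fun u _ => hL1 u) (fun u _ => ?_)
      have := hLx1 u
      rw [hall u]
      linarith
    have h1 : ∀ u, x u 0 ≤ 0 := fun u =>
      ge_of_tendsto htop1 ((eventually_ge_atTop u).mono fun v hv => hmono hv)
    have h2 : ∀ u, 0 ≤ x u 0 := fun u =>
      le_of_tendsto hbot1 ((eventually_le_atBot u).mono fun v hv => hmono hv)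
    apply hne 0
    funext i
    fin_cases i
    · exact le_antisymm (h1 0) (h2 0)
    · exact hall 0
  -- sign of x₂ never changes
  have hivt : ∀ a b : ℝ, x a 1 < 0 → 0 < x b 1 → False := by
    intro a b ha hb
    rcases le_total a b with h | h
    · obtain ⟨c, _, hc⟩ := intermediate_value_Icc h hc2.continuousOn ⟨ha.le, hb.le⟩
      exact hx2ne c hc
    · obtain ⟨c, _, hc⟩ := intermediate_value_Icc' h hc2.continuousOn ⟨ha.le, hb.le⟩
      exact hx2ne c hc
  -- μ * x₂ always positive is impossible
  have hnotpos : ¬ (∀ t, 0 < μ * x t 1) := by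
    intro hpos
    have hmono : Monotone fun t => x t 0 := by
      intro a b hab
      refine le_of_rderiv_nonneg hab hc1.continuousOn (fun u _ => hL1 u) (fun u _ => ?_)
      have := hLx1 u
      have := hpos u
      linarith
    have h1 : ∀ u, x u 0 ≤ 0 := fun u =>
      ge_of_tendsto htop1 ((eventually_ge_atTop u).mono fun v hv => hmono hv)
    have h2 : ∀ u, 0 ≤ x u 0 := fun u =>
      le_of_tendsto hbot1 ((eventually_le_atBot u).mono fun v hv => hmono hv)
    have hzero : ∀ u, x u 0 = 0 := fun u => le_antisymm (h1 u) (h2 u)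
    have hconst : HasDerivWithinAt (fun _ : ℝ => (0:ℝ)) (L 0 * x 0 0 + μ * x 0 1) (Set.Ici 0) 0 :=
      (hL1 0).congr (fun y _ => (hzero y).symm) (hzero 0).symm
    have hu := (uniqueDiffOn_Ici (0:ℝ)) 0 Set.self_mem_Ici
    have e1 := hconst.derivWithin hu
    have e2 := (hasDerivWithinAt_const (0:ℝ) (Set.Ici (0:ℝ)) (0:ℝ)).derivWithin hu
    rw [e2] at e1
    have := hpos 0
    rw [hzero 0] at e1
    linarith [e1.symm ▸ this]
  -- conclude
  intro t
  rcases (Ne.lt_or_gt (hx2ne t)) with h | h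
  · rcases (Ne.lt_or_gt hμ) with hμ' | hμ'
    · exfalso
      apply hnotpos
      intro u
      rcases (Ne.lt_or_gt (hx2ne u)) with h' | h'
      · exact mul_pos_of_neg_of_neg hμ' h'
      · exact absurd (hivt t u h h') id
    · exact mul_neg_of_pos_of_neg hμ' h
  · rcases (Ne.lt_or_gt hμ) with hμ' | hμ'
    · exact mul_neg_of_neg_of_pos hμ' h
    · exfalso
      apply hnotpos
      intro u
      rcases (Ne.lt_or_gt (hx2ne u)) with h' | h'
      · exact absurd (hivt u t h' h) id
      · exact mul_pos hμ' h'

theorem exists_aux (lamP lamM μ : ℝ) (hP : 0 < lamP) (hM : lamM < 0) (hμ : μ ≠ 0) :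
    ∃ x : ℝ → Fin 2 → ℝ, IsHomoclinic3 !![lamP, μ; 0, lamP] !![lamM, μ; 0, lamM] x := by
  classical
  set E : ℝ → ℝ := fun t => if t ≤ 0 then Real.exp (lamP * t) else Real.exp (lamM * t) with hEdef
  set fC : ℝ → ℝ → Fin 2 → ℝ :=
    fun c t => ![-(μ * μ) * t * Real.exp (c * t), -μ * Real.exp (c * t)] with hfCdef
  set xs : ℝ → Fin 2 → ℝ := fun t => ![-(μ * μ) * t * E t, -μ * E t] with hxdef
  have hEneg : ∀ t : ℝ, t ≤ 0 → E t = Real.exp (lamP * t) := fun t ht => if_pos ht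
  have hEpos : ∀ t : ℝ, 0 ≤ t → E t = Real.exp (lamM * t) := by
    intro t ht
    rcases eq_or_lt_of_le ht with h | h
    · rw [hEdef]; simp only [← h, mul_zero]; norm_num
    · exact if_neg (not_le.2 h)
  have hfP : ∀ t : ℝ, t ≤ 0 → xs t = fC lamP t := by
    intro t ht; rw [hxdef, hfCdef]; simp only [hEneg t ht]
  have hfM : ∀ t : ℝ, 0 ≤ t → xs t = fC lamM t := by
    intro t ht; rw [hxdef, hfCdef]; simp only [hEpos t ht]
  have hxs0 : ∀ t, xs t 0 = -(μ * μ) * t * E t := fun t => rfl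
  have hxs1 : ∀ t, xs t 1 = -μ * E t := fun t => rfl
  -- derivative of the smooth pieces
  have hder : ∀ c t : ℝ, HasDerivAt (fC c) ((!![c, μ; 0, c]).mulVec (fC c t)) t := by
    intro c t
    rw [hasDerivAt_pi]
    intro i
    have hlin : HasDerivAt (fun s : ℝ => c * s) c t := by
      simpa using (hasDerivAt_id t).const_mul c
    have hexp := hlin.exp
    have hv0 : fC c t 0 = -(μ * μ) * t * Real.exp (c * t) := rfl
    have hv1 : fC c t 1 = -μ * Real.exp (c * t) := rfl
    fin_cases i
    · show HasDerivAt (fun s => -(μ * μ) * s * Real.exp (c * s)) ((!![c, μ; 0, c]).mulVec (fC c t) 0) t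
      have h1 : HasDerivAt (fun s : ℝ => -(μ * μ) * s) (-(μ * μ)) t := by
        simpa using (hasDerivAt_id t).const_mul (-(μ * μ))
      have h2 := h1.mul hexp
      have h3 : (!![c, μ; 0, c]).mulVec (fC c t) 0
          = -(μ * μ) * Real.exp (c * t) + -(μ * μ) * t * (Real.exp (c * t) * c) := by
        rw [mulVec_explicit]
        show c * (fC c t 0) + μ * (fC c t 1) = _
        rw [hv0, hv1]; ring
      rw [h3]
      exact h2
    · show HasDerivAt (fun s => -μ * Real.exp (c * s)) ((!![c, μ; 0, c]).mulVec (fC c t) 1) t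
      have h2 := hexp.const_mul (-μ)
      have h3 : (!![c, μ; 0, c]).mulVec (fC c t) 1 = -μ * (Real.exp (c * t) * c) := by
        rw [mulVec_explicit]
        show c * (fC c t 1) = _
        rw [hv1]; ring
      rw [h3]
      exact h2
  have hμμ : 0 < μ * μ := mul_self_pos.2 hμ
  refine ⟨xs, ⟨?_, ?_⟩, ?_, ?_, ?_⟩
  · -- continuity
    have hE : Continuous E := by
      rw [hEdef]
      apply Continuous.if_le (by fun_prop) (by fun_prop) continuous_id continuous_const
      intro t ht
      simp only [id_eq] at ht
      rw [ht]; simp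
    refine continuous_pi fun i => ?_
    fin_cases i
    · show Continuous fun t => -(μ * μ) * t * E t
      exact (continuous_const.mul continuous_id).mul hE
    · show Continuous fun t => -μ * E t
      exact continuous_const.mul hE
  · -- the differential equations
    intro t
    constructor
    · intro ht
      have htneg : t < 0 := by
        by_contra h
        push_neg at h
        rw [hxs0, hEpos t h] at ht
        nlinarith [Real.exp_pos (lamM * t), mul_nonneg (mul_nonneg hμμ.le h) (Real.exp_pos (lamM * t)).le]
      have hmem : Set.Iio (0:ℝ) ∈ nhdsWithin t (Set.Ici t) :=
        nhdsWithin_le_nhds (Iio_mem_nhds htneg)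
      have heq : xs =ᶠ[nhdsWithin t (Set.Ici t)] fC lamP := by
        filter_upwards [hmem] with u hu
        exact hfP u (le_of_lt hu)
      have hd := ((hder lamP t).hasDerivWithinAt (s := Set.Ici t)).congr_of_eventuallyEq heq
        (hfP t htneg.le)
      rw [hfP t htneg.le]
      exact hd
    · intro ht
      have htpos : 0 ≤ t := by
        by_contra h
        push_neg at h
        rw [hxs0, hEneg t h.le] at ht
        nlinarith [Real.exp_pos (lamP * t), mul_pos (mul_pos hμμ (neg_pos.2 h)) (Real.exp_pos (lamP * t))]
      have heq : ∀ u ∈ Set.Ici t, xs u = fC lamM u := fun u hu => hfM u (htpos.trans hu)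
      have hd := ((hder lamM t).hasDerivWithinAt (s := Set.Ici t)).congr heq (hfM t htpos)
      rw [hfM t htpos]
      exact hd
  · -- nowhere zero
    intro t h
    have h1 : xs t 1 = 0 := by rw [h]; rfl
    rw [hxs1] at h1
    have hE0 : E t ≠ 0 := by
      rcases le_or_gt t 0 with h' | h'
      · rw [hEneg t h']; exact Real.exp_ne_zero _
      · rw [hEpos t h'.le]; exact Real.exp_ne_zero _
    exact (mul_ne_zero (neg_ne_zero.2 hμ) hE0) h1
  · -- tendsto atTop
    rw [tendsto_pi_nhds]
    intro i
    have hev : ∀ᶠ t in atTop, fC lamM t i = xs t i := by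
      filter_upwards [eventually_ge_atTop (0:ℝ)] with t ht
      rw [hfM t ht]
    rw [← tendsto_congr' hev]
    have hexp : Tendsto (fun t : ℝ => Real.exp (lamM * t)) atTop (nhds 0) := by
      have := tendsto_exp_neg_mul (-lamM) (by linarith)
      simpa using this
    have hmul : Tendsto (fun t : ℝ => t * Real.exp (lamM * t)) atTop (nhds 0) := by
      have := tendsto_mul_exp_neg_mul (-lamM) (by linarith)
      simpa using this
    fin_cases i
    · show Tendsto (fun t => -(μ * μ) * t * Real.exp (lamM * t)) atTop (nhds 0)
      have := hmul.const_mul (-(μ * μ))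
      rw [mul_zero] at this
      refine this.congr fun t => ?_
      ring
    · show Tendsto (fun t => -μ * Real.exp (lamM * t)) atTop (nhds 0)
      have := hexp.const_mul (-μ)
      rw [mul_zero] at this
      exact this
  · -- tendsto atBot
    rw [tendsto_pi_nhds]
    intro i
    have hev : ∀ᶠ t in atBot, fC lamP t i = xs t i := by
      filter_upwards [eventually_le_atBot (0:ℝ)] with t ht
      rw [hfP t ht]
    rw [← tendsto_congr' hev]
    have hneg : Tendsto (fun t : ℝ => -t) atBot atTop := tendsto_neg_atBot_atTop
    have hexp : Tendsto (fun t : ℝ => Real.exp (lamP * t)) atBot (nhds 0) := by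
      have := (tendsto_exp_neg_mul lamP hP).comp hneg
      refine this.congr fun t => ?_
      simp only [Function.comp_apply]
      ring_nf
    have hmul : Tendsto (fun t : ℝ => t * Real.exp (lamP * t)) atBot (nhds 0) := by
      have := ((tendsto_mul_exp_neg_mul lamP hP).comp hneg).neg
      rw [neg_zero] at this
      refine this.congr fun t => ?_
      simp only [Function.comp_apply]
      rw [show -lamP * -t = lamP * t by ring]
      ring
    fin_cases i
    · show Tendsto (fun t => -(μ * μ) * t * Real.exp (lamP * t)) atBot (nhds 0)
      have := hmul.const_mul (-(μ * μ))
      rw [mul_zero] at this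
      refine this.congr fun t => ?_
      ring
    · show Tendsto (fun t => -μ * Real.exp (lamP * t)) atBot (nhds 0)
      have := hexp.const_mul (-μ)
      rw [mul_zero] at this
      exact this

end Aux

/-- For `A⁺ = [[λ⁺, μ],[0, λ⁺]]`, `A⁻ = [[λ⁻, μ],[0, λ⁻]]` with `λ⁺ > 0 > λ⁻`:
if `μ ≠ 0` system (3) has a homoclinic orbit; if `μ < 0` every homoclinic orbit
lies above the `x₁`-axis, and if `μ > 0` every homoclinic orbit lies below it. -/
theorem homoclinic_bifurcation (lamP lamM μ : ℝ) (hP : 0 < lamP) (hM : lamM < 0) :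
    (μ ≠ 0 →
      ∃ x : ℝ → Fin 2 → ℝ, IsHomoclinic3 !![lamP, μ; 0, lamP] !![lamM, μ; 0, lamM] x) ∧
    (μ < 0 →
      ∀ x : ℝ → Fin 2 → ℝ, IsHomoclinic3 !![lamP, μ; 0, lamP] !![lamM, μ; 0, lamM] x →
        ∀ t : ℝ, 0 < x t 1) ∧
    (0 < μ →
      ∀ x : ℝ → Fin 2 → ℝ, IsHomoclinic3 !![lamP, μ; 0, lamP] !![lamM, μ; 0, lamM] x →
        ∀ t : ℝ, x t 1 < 0) := by
  refine ⟨fun hμ => exists_aux lamP lamM μ hP hM hμ, fun hμ x hx t => ?_, fun hμ x hx t => ?_⟩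
  · have h := sign_aux lamP lamM μ hP hM (ne_of_lt hμ) x hx t
    by_contra hc
    push_neg at hc
    nlinarith
  · have h := sign_aux lamP lamM μ hP hM (ne_of_gt hμ) x hx t
    by_contra hc
    push_neg at hc
    nlinarith
end

section
/- Let c ∈ ℝ² be nonzero and let A⁺, A⁻ be real 2×2 matrices such that (cᵀ, A⁺) and (cᵀ, A⁻) are observable (i.e., det([cᵀ; cᵀA⁺]) ≠ 0 and det([cᵀ; cᵀA⁻]) ≠ 0, where [cᵀ; cᵀA] denotes the 2×2 matrix with rows cᵀ and cᵀA). If the overall vector field is continuous across the boundary, i.e., A⁺x = A⁻x for every x ∈ ℝ² with cᵀx = 0, then det([cᵀ; cᵀA⁺]) · det([cᵀ; cᵀA⁻]) > 0. -/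
open Matrix

/-- If `(cᵀ, A⁺)` and `(cᵀ, A⁻)` are observable and the overall vector field is
continuous across the boundary (`A⁺x = A⁻x` whenever `cᵀx = 0`), then
`det([cᵀ; cᵀA⁺]) ⬝ det([cᵀ; cᵀA⁻]) > 0`. -/
theorem continuity_implies_det_product_pos (c : Fin 2 → ℝ) (hc : c ≠ 0)
    (Ap Am : Matrix (Fin 2) (Fin 2) ℝ)
    (hobsP : (Matrix.of ![c, c ᵥ* Ap]).det ≠ 0)
    (hobsM : (Matrix.of ![c, c ᵥ* Am]).det ≠ 0)
    (hcont : ∀ x : Fin 2 → ℝ, c ⬝ᵥ x = 0 → Ap.mulVec x = Am.mulVec x) :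
    0 < (Matrix.of ![c, c ᵥ* Ap]).det * (Matrix.of ![c, c ᵥ* Am]).det := by
  have h := hcont ![-c 1, c 0] (by
    simp [dotProduct, Fin.sum_univ_two]; ring)
  have h0 := congrFun h 0
  have h1 := congrFun h 1
  simp [Matrix.mulVec, dotProduct, Fin.sum_univ_two] at h0 h1
  have key : (Matrix.of ![c, c ᵥ* Ap]).det = (Matrix.of ![c, c ᵥ* Am]).det := by
    simp [Matrix.det_fin_two, Matrix.vecMul, dotProduct, Fin.sum_univ_two]
    linear_combination c 0 * h0 + c 1 * h1
  rw [key]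
  exact mul_self_pos.mpr hobsM
end
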